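/- There exists a dynamic graph on a vertex set of 4 vertices that is 3-Path Connected but in which G_r is disconnected for every round r (hence the dynamic graph is not 1-Interval Connected and not 3-Interval Connected). In other words, T-Path Connectivity does not imply T-Interval Connectivity. -/

import Mathlib

/-!
The three perfect matchings of `K₄` are `u ~ u ^^^ d` for `d = 1, 2, 3`. Cycling through them
gives a graph that is a perfect matching, hence disconnected, in every round, while any three
consecutive rounds contain all three matchings and so join every pair of vertices by an edge.
-/

/-- `G` is `T`-Interval Connected: for every round `r`, the graph whose edges are
exactly those present in every `G i` for `i ∈ [r, r+T-1]` is connected. -/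
def TIntervalConnected {V : Type*} (G : ℕ → SimpleGraph V) (T : ℕ) : Prop :=
  ∀ r : ℕ, (⨅ i ∈ Set.Icc r (r + T - 1), G i).Connected

/-- `G` is `T`-Path Connected: for every round `r` and every pair of vertices `u, v`,
there is a round `i ∈ [r, r+T-1]` in which `u` and `v` lie in the same connected
component of `G i`. -/
def TPathConnected {V : Type*} (G : ℕ → SimpleGraph V) (T : ℕ) : Prop :=
  ∀ r : ℕ, ∀ u v : V, ∃ i ∈ Set.Icc r (r + T - 1), (G i).Reachable u v

theorem TIntervalConnected.connected {V : Type*} {G : ℕ → SimpleGraph V} {T : ℕ}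
    (h : TIntervalConnected G T) (hT : 0 < T) (r : ℕ) : (G r).Connected :=
  (h r).mono (iInf₂_le r ⟨le_rfl, by omega⟩)

theorem tPathConnected_of_forall_adj {V : Type*} {G : ℕ → SimpleGraph V} {T : ℕ} (hT : 0 < T)
    (h : ∀ r u v, u ≠ v → ∃ i ∈ Set.Icc r (r + T - 1), (G i).Adj u v) :
    TPathConnected G T := by
  intro r u v
  by_cases huv : u = v
  · exact ⟨r, ⟨le_rfl, by omega⟩, huv ▸ .refl u⟩
  · obtain ⟨i, hi, hadj⟩ := h r u v huv
    exact ⟨i, hi, hadj.reachable⟩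

theorem Nat.exists_mem_Icc_mod_eq (r : ℕ) {n c : ℕ} (hc : c < n) :
    ∃ i ∈ Set.Icc r (r + n - 1), i % n = c := by
  have hr := Nat.mod_lt r (by omega : 0 < n)
  refine ⟨r + (c + n - r % n) % n, ⟨by omega, ?_⟩, ?_⟩
  · have := Nat.mod_lt (c + n - r % n) (by omega : 0 < n)
    omega
  · rw [Nat.add_mod_mod, ← Nat.mod_add_mod, Nat.add_sub_cancel' (by omega), Nat.add_mod_right,
      Nat.mod_eq_of_lt hc]

def xorMatching (d : ℕ) : SimpleGraph (Fin 4) where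
  Adj u v := u ≠ v ∧ u.val ^^^ v.val = d
  symm := ⟨fun _ _ h => ⟨Ne.symm h.1, Nat.xor_comm _ _ ▸ h.2⟩⟩
  loopless := ⟨fun _ h => h.1 rfl⟩

instance (d : ℕ) : DecidableRel (xorMatching d).Adj :=
  fun u v => inferInstanceAs (Decidable (u ≠ v ∧ u.val ^^^ v.val = d))

theorem xorMatching_not_connected {d : ℕ} (hd : d < 4) : ¬ (xorMatching d).Connected := by
  -- the component of `0` is `{0, d}`, which misses `2` if `d < 2` and `1` otherwise
  have : ¬ (xorMatching d).Reachable 0 (if d < 2 then 2 else 1) := by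
    interval_cases d <;> decide
  exact fun h => this (h.preconnected _ _)

theorem Fin.val_xor_val_mem_Icc {u v : Fin 4} (h : u ≠ v) : u.val ^^^ v.val ∈ Set.Icc 1 3 := by
  revert u v
  decide

/-- There is a dynamic graph on 4 vertices that is 3-Path Connected but in which
`G r` is disconnected in every round (hence it is neither 1-Interval Connected nor
3-Interval Connected): `T`-Path Connectivity does not imply `T`-Interval
Connectivity. -/
theorem exists_tPathConnected_not_tIntervalConnected :
    ∃ G : ℕ → SimpleGraph (Fin 4),
      TPathConnected G 3 ∧ (∀ r : ℕ, ¬ (G r).Connected) ∧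
        ¬ (∀ r : ℕ, (G r).Connected) ∧ ¬ TIntervalConnected G 3 := by
  let G r := xorMatching (r % 3 + 1)
  have disconnected (r : ℕ) : ¬ (G r).Connected := xorMatching_not_connected (by omega)
  have pathConnected : TPathConnected G 3 := by
    refine tPathConnected_of_forall_adj (by norm_num) fun r u v huv => ?_
    obtain ⟨hd₁, hd₃⟩ := Set.mem_Icc.mp (Fin.val_xor_val_mem_Icc huv)
    obtain ⟨i, hi, hi_mod⟩ := Nat.exists_mem_Icc_mod_eq r (by omega : (u.val ^^^ v.val) - 1 < 3)
    exact ⟨i, hi, huv, by omega⟩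
  exact ⟨G, pathConnected, disconnected, fun h => disconnected 0 (h 0),
    fun h => disconnected 0 (h.connected (by norm_num) 0)⟩
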